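/- Fix an integer k ≥ 3, a k-vertex graph F and r ∈ ℕ such that either (1) F = K_k and r = k−1, or (2) F is a tree on k vertices or F = C_k, and r = 2. Then for any μ > 0 there exists α > 0 such that the following holds for all sufficiently large n ∈ ℕ: if G is an n-vertex graph with minimum degree δ(G) ≥ μn and α_r(G) ≤ αn, then, with β := μ²/8, every vertex of G is (F, βn, 1)-reachable to at least (μ/4)n other vertices. -/

import Mathlib

open Finset

namespace RTT

variable {k n : ℕ}

/-- `S` spans a copy of the `k`-vertex graph `F` in `G`:
there is an injective graph homomorphism from `F` to `G` with image exactly `S`. -/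
def SpansCopy (F : SimpleGraph (Fin k)) (G : SimpleGraph (Fin n))
    (S : Finset (Fin n)) : Prop :=
  ∃ f : Fin k → Fin n, Function.Injective f ∧
    (∀ a b, F.Adj a b → G.Adj (f a) (f b)) ∧ Finset.image f Finset.univ = S

/-- `T` is an `F`-tiling in `G`: a collection of pairwise vertex-disjoint vertex sets,
each spanning a copy of `F`. -/
def IsTiling (F : SimpleGraph (Fin k)) (G : SimpleGraph (Fin n))
    (T : Finset (Finset (Fin n))) : Prop :=
  (∀ S ∈ T, SpansCopy F G S) ∧ ∀ S ∈ T, ∀ S' ∈ T, S ≠ S' → Disjoint S S'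

/-- The induced subgraph of `G` on the vertex set `A` has a perfect `F`-tiling. -/
def PerfTilingOn (F : SimpleGraph (Fin k)) (G : SimpleGraph (Fin n))
    (A : Finset (Fin n)) : Prop :=
  ∃ T : Finset (Finset (Fin n)), IsTiling F G T ∧ T.biUnion id = A

/-- The minimum degree of `G` is at least `x`. -/
def MinDegGE (G : SimpleGraph (Fin n)) (x : ℝ) : Prop :=
  ∀ v : Fin n, x ≤ ((G.neighborSet v).ncard : ℝ)

/-- The `r`-independence number of `G` is at most `x`: every vertex set whose induced
subgraph contains no copy of `K_r` has size at most `x`. -/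
def IndepBound (G : SimpleGraph (Fin n)) (r : ℕ) (x : ℝ) : Prop :=
  ∀ S : Finset (Fin n), (∀ T ⊆ S, ¬ G.IsNClique r T) → (S.card : ℝ) ≤ x

/-- `α*(G) ≤ x`: every bipartite hole of `G` has size at most `x`. -/
def HoleBound (G : SimpleGraph (Fin n)) (x : ℝ) : Prop :=
  ∀ (s : ℕ) (U₁ U₂ : Finset (Fin n)), Disjoint U₁ U₂ → U₁.card = s → U₂.card = s →
    (∀ u ∈ U₁, ∀ v ∈ U₂, ¬ G.Adj u v) → (s : ℝ) ≤ x

/-- `A` is a `ξ`-absorbing set with respect to `V'` (for the `k`-vertex graph `F`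
in the `n`-vertex graph `G`). -/
def IsAbsorbingSet (F : SimpleGraph (Fin k)) (G : SimpleGraph (Fin n)) (ξ : ℝ)
    (V' A : Finset (Fin n)) : Prop :=
  ∀ U : Finset (Fin n), U ⊆ V' \ A → (U.card : ℝ) ≤ ξ * n →
    k ∣ (A ∪ U).card → PerfTilingOn F G (A ∪ U)

/-- `A` is an `(F,t)`-absorber for the `k`-set `S`. -/
def IsAbsorber (F : SimpleGraph (Fin k)) (G : SimpleGraph (Fin n)) (t : ℕ)
    (S A : Finset (Fin n)) : Prop :=
  Disjoint A S ∧ A.card ≤ k ^ 2 * t ∧ PerfTilingOn F G A ∧ PerfTilingOn F G (A ∪ S)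

/-- `S` has a family of at least `x` pairwise vertex-disjoint `(F,t)`-absorbers in `G`. -/
def HasManyAbsorbers (F : SimpleGraph (Fin k)) (G : SimpleGraph (Fin n)) (t : ℕ)
    (S : Finset (Fin n)) (x : ℝ) : Prop :=
  ∃ 𝒜 : Finset (Finset (Fin n)), x ≤ (𝒜.card : ℝ) ∧
    (∀ A ∈ 𝒜, IsAbsorber F G t S A) ∧
    ∀ A ∈ 𝒜, ∀ A' ∈ 𝒜, A ≠ A' → Disjoint A A'

/-- `𝒮` is an `F`-fan at `v` in `U`: a collection of pairwise disjoint `(k-1)`-sets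
`S ⊆ U \ {v}` such that `{v} ∪ S` spans a copy of `F`; its size is `𝒮.card`. -/
def IsFan (F : SimpleGraph (Fin k)) (G : SimpleGraph (Fin n)) (v : Fin n)
    (U : Finset (Fin n)) (𝒮 : Finset (Finset (Fin n))) : Prop :=
  (∀ S ∈ 𝒮, S ⊆ U.erase v ∧ S.card = k - 1 ∧ SpansCopy F G (insert v S)) ∧
    ∀ S ∈ 𝒮, ∀ S' ∈ 𝒮, S ≠ S' → Disjoint S S'

/-- `u` and `v` are `(F, m, t)`-reachable in `G`. -/
def FReachable (F : SimpleGraph (Fin k)) (G : SimpleGraph (Fin n)) (m : ℝ) (t : ℕ)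
    (u v : Fin n) : Prop :=
  ∀ W : Finset (Fin n), (W.card : ℝ) ≤ m →
    ∃ S : Finset (Fin n), Disjoint S W ∧ u ∉ S ∧ v ∉ S ∧ S.card ≤ k * t - 1 ∧
      PerfTilingOn F G (insert u S) ∧ PerfTilingOn F G (insert v S)

/-- `U` is `(F, m, t)`-closed in `G`. -/
def FClosed (F : SimpleGraph (Fin k)) (G : SimpleGraph (Fin n)) (m : ℝ) (t : ℕ)
    (U : Finset (Fin n)) : Prop :=
  ∀ u ∈ U, ∀ v ∈ U, u ≠ v → FReachable F G m t u v

/-- `P` is a partition of the vertex set of an `n`-vertex graph into `C` parts. -/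
def IsPartition {C : ℕ} (P : Fin C → Finset (Fin n)) : Prop :=
  (∀ i j, i ≠ j → Disjoint (P i) (P j)) ∧ Finset.univ.biUnion P = Finset.univ

/-- The `k`-vector `v` is `(F, β)`-robust with respect to the partition `P`:
it has coordinate sum `k`, and avoiding any set `W` of at most `βn` vertices there is
a copy of `F` whose vertex set has index vector `v`. -/
def RobustVec (F : SimpleGraph (Fin k)) (G : SimpleGraph (Fin n)) {C : ℕ}
    (P : Fin C → Finset (Fin n)) (β : ℝ) (v : Fin C → ℕ) : Prop :=
  (∑ i, v i) = k ∧
    ∀ W : Finset (Fin n), (W.card : ℝ) ≤ β * n →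
      ∃ S : Finset (Fin n), Disjoint S W ∧ SpansCopy F G S ∧ ∀ i, (S ∩ P i).card = v i

end RTT

/-!
At least `μn/4` vertices `u` share `μ²n/4` common neighbours with `v`: double count the edges
leaving `N(v)`. For such `u` and a forbidden set `W`, the common neighbourhood `C` of `u` and `v`
minus `W ∪ {u, v}` still has about `μ²n/8` vertices, and it suffices to find a `(k-1)`-set `S`
avoiding `W ∪ {u, v}` that every vertex adjacent to all of `C` completes to a copy of `F`. For
`F = K_k` take a `K_{k-1}` inside `C`, which exists as `α_{k-1}(G)` is small. For `F = C_k` take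
a path on `k - 1` vertices inside `C`, obtained from `α(G) ≤ αn` by repeatedly joining two
disjoint paths whose starting vertices are adjacent. For a tree, embed `F` greedily using the
minimum degree, with the neighbour of a leaf mapped into `C` and the leaf itself left out.
-/

namespace SimpleGraph

section Copies

variable {β V : Type*} {F : SimpleGraph β} {G : SimpleGraph V} {X Y : Finset β} {f : β → V}

def IsPartialCopy (F : SimpleGraph β) (G : SimpleGraph V) (X : Finset β) (f : β → V) : Prop :=
  Set.InjOn f X ∧ ∀ a ∈ X, ∀ b ∈ X, F.Adj a b → G.Adj (f a) (f b)

lemma IsPartialCopy.mono (hf : IsPartialCopy F G X f) (hYX : Y ⊆ X) : IsPartialCopy F G Y f :=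
  ⟨hf.1.mono (by simpa using hYX), fun a ha b hb => hf.2 a (hYX ha) b (hYX hb)⟩

lemma IsPartialCopy.update_insert [DecidableEq β] [DecidableEq V] (hf : IsPartialCopy F G X f)
    {y : β} {w : V} (hy : y ∉ X) (hw : w ∉ X.image f)
    (hadj : ∀ b ∈ X, F.Adj y b → G.Adj w (f b)) :
    IsPartialCopy F G (insert y X) (Function.update f y w) := by
  have heq : Set.EqOn f (Function.update f y w) X := fun b hb =>
    (Function.update_of_ne (ne_of_mem_of_not_mem hb hy) w f).symm
  constructor
  · rw [coe_insert, Set.injOn_insert (by simpa using hy), Function.update_self, ← heq.image_eq]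
    exact ⟨hf.1.congr heq, by rwa [← coe_image, mem_coe]⟩
  · intro a ha b hb hab
    rw [mem_insert] at ha hb
    rcases ha with rfl | ha <;> rcases hb with rfl | hb
    · exact absurd hab (F.loopless.irrefl _)
    · rw [Function.update_self, ← heq hb]
      exact hadj b hb hab
    · rw [Function.update_self, ← heq ha]
      exact (hadj a ha hab.symm).symm
    · rw [← heq ha, ← heq hb]
      exact hf.2 a ha b hb hab

end Copies

section Trees

variable {β : Type*} {F : SimpleGraph β}

lemma IsTree.exists_adj_dist_add_one (hF : F.IsTree) (r : β) {y : β} (hy : y ≠ r) :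
    ∃ z, F.Adj y z ∧ F.dist r z + 1 = F.dist r y := by
  obtain ⟨p, -, hp⟩ := hF.connected.exists_path_of_dist y r
  cases p with
  | nil => exact absurd rfl hy
  | cons h q =>
    refine ⟨_, h, ?_⟩
    have hq := dist_le q
    rw [Walk.length_cons] at hp
    rw [dist_comm] at hp hq
    rcases hF.dist_eq_dist_add_one_of_adj r h with h' | h' <;> omega

lemma IsTree.eq_of_adj_of_dist_add_one (hF : F.IsTree) {r y z₁ z₂ : β} (h₁ : F.Adj y z₁)
    (h₂ : F.Adj y z₂) (hd₁ : F.dist r z₁ + 1 = F.dist r y)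
    (hd₂ : F.dist r z₂ + 1 = F.dist r y) : z₁ = z₂ := by
  classical
  obtain ⟨p, hp, -⟩ := hF.connected.exists_path_of_dist r y
  have key : ∀ z, F.Adj y z → F.dist r z + 1 = F.dist r y → z = p.penultimate := by
    intro z hz hd
    obtain ⟨q, hq, hqlen⟩ := hF.connected.exists_path_of_dist r z
    have hyq : y ∉ q.support := fun hy => by
      have := (dist_le (q.takeUntil y hy)).trans (q.length_takeUntil_le_length hy)
      omega
    exact hF.isAcyclic.eq_penultimate_of_adj_end hp hz
      (hF.isAcyclic.mem_support_of_ne_mem_support_of_adj_of_isPath hp hq hz hyq)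
  rw [key z₁ h₁ hd₁, key z₂ h₂ hd₂]

def IsLowerSetOfDist (F : SimpleGraph β) (r : β) (X : Finset β) : Prop :=
  ∀ a ∈ X, ∀ b, F.dist r b < F.dist r a → b ∈ X

variable [Fintype β] [DecidableEq β] {V : Type*} [Fintype V] [DecidableEq V] {G : SimpleGraph V}
  [DecidableRel G.Adj] {A : Finset V}

/-- The new vertex `y` is a closest one outside `X`; its only neighbour in `X` is its parent, and
the degree bound leaves a fresh neighbour of the parent's image. -/
lemma IsTree.exists_isPartialCopy_insert (hF : F.IsTree) {r : β} {X : Finset β} {f : β → V}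
    (hrX : r ∈ X) (hX : IsLowerSetOfDist F r X) (hXc : #X < Fintype.card β)
    (hf : IsPartialCopy F G X f) (hdeg : ∀ x, #A + Fintype.card β ≤ G.degree x) :
    ∃ y ∉ X, IsLowerSetOfDist F r (insert y X) ∧
      ∃ w ∉ A, IsPartialCopy F G (insert y X) (Function.update f y w) := by
  obtain ⟨y, hyX, hymin⟩ := (univ \ X).exists_min_image (F.dist r)
    (by rw [← card_pos, card_sdiff_of_subset (subset_univ X), card_univ]; omega)
  rw [mem_sdiff] at hyX
  have hlower : ∀ b, F.dist r b < F.dist r y → b ∈ X := fun b hb => by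
    by_contra h
    exact (hymin b (by simp [h])).not_gt hb
  obtain ⟨z, hyz, hz⟩ := hF.exists_adj_dist_add_one r (ne_of_mem_of_not_mem hrX hyX.2).symm
  have hparent : ∀ b ∈ X, F.Adj y b → b = z := fun b hb hyb => by
    rcases hF.dist_eq_dist_add_one_of_adj r hyb with h | h
    · exact hF.eq_of_adj_of_dist_add_one hyb hyz h.symm hz
    · exact absurd (hX b hb y (by omega)) hyX.2
  obtain ⟨w, hw, hwX⟩ : ∃ w ∈ G.neighborFinset (f z), w ∉ A ∪ X.image f := by
    refine exists_mem_notMem_of_card_lt_card ?_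
    have := (card_union_le A (X.image f)).trans (add_le_add_right card_image_le _)
    rw [card_neighborFinset_eq_degree]
    linarith [hdeg (f z)]
  rw [mem_union, not_or] at hwX
  refine ⟨y, hyX.2, fun a ha b hb => ?_, w, hwX.1,
    hf.update_insert hyX.2 hwX.2 fun b hb hyb => ?_⟩
  · rcases mem_insert.mp ha with rfl | ha
    · exact mem_insert_of_mem (hlower b hb)
    · exact mem_insert_of_mem (hX a ha b hb)
  · rw [hparent b hb hyb]
    exact ((mem_neighborFinset _ _ _).mp hw).symm

lemma IsTree.exists_isPartialCopy (hF : F.IsTree) (r : β) {c : V} (hc : c ∉ A)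
    (hdeg : ∀ x, #A + Fintype.card β ≤ G.degree x) :
    ∃ f : β → V, IsPartialCopy F G univ f ∧ f r = c ∧ ∀ a, f a ∉ A := by
  suffices h : ∀ j, j + 1 ≤ Fintype.card β → ∃ X : Finset β, #X = j + 1 ∧ r ∈ X ∧
      IsLowerSetOfDist F r X ∧
      ∃ f : β → V, IsPartialCopy F G X f ∧ f r = c ∧ ∀ a ∈ X, f a ∉ A by
    have hβ : 0 < Fintype.card β := Fintype.card_pos_iff.mpr ⟨r⟩
    obtain ⟨X, hX, -, -, f, hf, hfr, hfA⟩ := h (Fintype.card β - 1) (by omega)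
    obtain rfl : X = univ := eq_univ_of_card X (by omega)
    exact ⟨f, hf, hfr, fun a => hfA a (mem_univ a)⟩
  intro j
  induction j with
  | zero =>
    refine fun _ => ⟨{r}, rfl, mem_singleton_self r, fun a ha b hb => ?_,
      fun _ => c, ⟨by simp, by simp⟩, rfl, by simpa⟩
    rw [mem_singleton.mp ha, dist_self] at hb
    exact absurd hb (Nat.not_lt_zero _)
  | succ j ih =>
    intro hj
    obtain ⟨X, hXc, hrX, hX, f, hf, hfr, hfA⟩ := ih (by omega)
    obtain ⟨y, hyX, hlow, w, hwA, hcopy⟩ :=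
      hF.exists_isPartialCopy_insert hrX hX (by omega) hf hdeg
    refine ⟨insert y X, by rw [card_insert_of_notMem hyX, hXc], mem_insert_of_mem hrX, hlow,
      _, hcopy, by rw [Function.update_of_ne (ne_of_mem_of_not_mem hrX hyX), hfr], fun a ha => ?_⟩
    rcases mem_insert.mp ha with rfl | ha
    · rwa [Function.update_self]
    · rw [Function.update_of_ne (ne_of_mem_of_not_mem ha hyX)]
      exact hfA a ha

end Trees

section Paths

variable {V : Type*} {G : SimpleGraph V} {D D' : Finset V}

def IsPathIn (G : SimpleGraph V) (D : Finset V) (p : List V) : Prop :=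
  p.IsChain G.Adj ∧ p.Nodup ∧ ∀ x ∈ p, x ∈ D

lemma IsPathIn.mono {p : List V} (hp : G.IsPathIn D p) (h : D ⊆ D') : G.IsPathIn D' p :=
  ⟨hp.1, hp.2.1, fun x hx => h (hp.2.2 x hx)⟩

lemma IsPathIn.take {p : List V} (hp : G.IsPathIn D p) (m : ℕ) : G.IsPathIn D (p.take m) :=
  ⟨hp.1.take m, (List.take_sublist m p).nodup hp.2.1,
    fun x hx => hp.2.2 x (List.mem_of_mem_take hx)⟩

lemma IsPathIn.reverse_append {x y : V} {p q : List V} (hp : G.IsPathIn D (x :: p))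
    (hq : G.IsPathIn D (y :: q)) (hdisj : ∀ z ∈ x :: p, z ∉ y :: q) (hxy : G.Adj x y) :
    G.IsPathIn D ((x :: p).reverse ++ y :: q) := by
  refine ⟨List.isChain_append.mpr ⟨?_, hq.1, ?_⟩, ?_, ?_⟩
  · exact List.isChain_reverse.mpr (hp.1.imp fun _ _ h => h.symm)
  · simpa using hxy
  · exact List.nodup_append.mpr ⟨List.nodup_reverse.mpr hp.2.1, hq.2.1,
      fun a ha b hb hab => hdisj a (List.mem_reverse.mp ha) (hab ▸ hb)⟩
  · intro z hz
    rcases List.mem_append.mp hz with hz | hz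
    · exact hp.2.2 z (List.mem_reverse.mp hz)
    · exact hq.2.2 z hz

variable [DecidableEq V] {a : ℕ}

/-- Pick `a + 1` disjoint paths greedily; their starting vertices span an edge. -/
lemma exists_disjoint_isPathIn_adj {ℓ c : ℕ}
    (hind : ∀ T : Finset V, G.IsIndepSet T → #T ≤ a)
    (hpath : ∀ D : Finset V, c ≤ #D →
      ∃ x p, (x :: p).length = ℓ ∧ G.IsPathIn D (x :: p))
    (hD : c + a * ℓ ≤ #D) :
    ∃ x p y q, (x :: p).length = ℓ ∧ (y :: q).length = ℓ ∧ G.IsPathIn D (x :: p) ∧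
      G.IsPathIn D (y :: q) ∧ (∀ z ∈ x :: p, z ∉ y :: q) ∧ G.Adj x y := by
  by_contra hno
  have key : ∀ j ≤ a + 1, ∃ H U : Finset V, #H = j ∧ U ⊆ D ∧ #U ≤ j * ℓ ∧
      G.IsIndepSet H ∧ ∀ x ∈ H, ∃ p, (x :: p).length = ℓ ∧ G.IsPathIn U (x :: p) := by
    intro j
    induction j with
    | zero => exact fun _ => ⟨∅, ∅, rfl, empty_subset D, by simp, by simp, by simp⟩
    | succ j ih =>
      intro hj
      obtain ⟨H, U, hH, hUD, hU, hindep, hpaths⟩ := ih (by omega)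
      obtain ⟨y, q, hq, hqD⟩ := hpath (D \ U) (by
        have := le_card_sdiff U D
        have : j * ℓ + ℓ ≤ a * ℓ + ℓ := by nlinarith
        omega)
      have hqU : ∀ z ∈ y :: q, z ∉ U := fun z hz => (mem_sdiff.mp (hqD.2.2 z hz)).2
      have hyH : y ∉ H := fun hy => by
        obtain ⟨p, -, hpU⟩ := hpaths y hy
        exact hqU y List.mem_cons_self (hpU.2.2 y List.mem_cons_self)
      have hcross : ∀ x ∈ H, ¬ G.Adj x y := fun x hx hxy => by
        obtain ⟨p, hp, hpU⟩ := hpaths x hx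
        exact hno ⟨x, p, y, q, hp, hq, hpU.mono hUD, hqD.mono sdiff_subset,
          fun z hz hz' => hqU z hz' (hpU.2.2 z hz), hxy⟩
      refine ⟨insert y H, U ∪ (y :: q).toFinset, by rw [card_insert_of_notMem hyH, hH],
        union_subset hUD fun z hz => (mem_sdiff.mp (hqD.2.2 z (by simpa using hz))).1, ?_, ?_, ?_⟩
      · calc #(U ∪ (y :: q).toFinset) ≤ j * ℓ + ℓ :=
            (card_union_le _ _).trans (add_le_add hU ((List.toFinset_card_le _).trans hq.le))
          _ = (j + 1) * ℓ := by ring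
      · rw [coe_insert]
        refine hindep.insert fun x hx _ => ⟨fun hyx => hcross x hx hyx.symm, hcross x hx⟩
      · intro x hx
        rcases mem_insert.mp hx with rfl | hx
        · exact ⟨q, hq, hqD.1, hqD.2.1,
            fun z hz => mem_union_right _ (List.mem_toFinset.mpr hz)⟩
        · obtain ⟨p, hp, hpU⟩ := hpaths x hx
          exact ⟨p, hp, hpU.mono subset_union_left⟩
  obtain ⟨H, -, hH, -, -, hindep, -⟩ := key (a + 1) le_rfl
  exact absurd (hind H hindep) (by omega)

/-- Two disjoint paths on `m + 1` vertices with adjacent starting vertices merge into one on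
`m + 2` vertices. The bound on `#D` stays linear in `a`, which is what lets `α` be a constant. -/
lemma exists_isPathIn (hind : ∀ T : Finset V, G.IsIndepSet T → #T ≤ a) (m : ℕ)
    {D : Finset V} (hD : (a + 1) * (m + 1) ^ 2 ≤ #D) :
    ∃ x p, (x :: p).length = m + 1 ∧ G.IsPathIn D (x :: p) := by
  induction m generalizing D with
  | zero =>
    obtain ⟨x, hx⟩ : D.Nonempty := card_pos.mp (by nlinarith)
    exact ⟨x, [], rfl, List.isChain_singleton x, List.nodup_singleton x, by simpa⟩
  | succ m ih =>
    obtain ⟨x, p, y, q, hp, hq, hpD, hqD, hdisj, hxy⟩ :=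
      exists_disjoint_isPathIn_adj hind (fun D hD => ih hD) (by nlinarith)
    obtain ⟨z, r, hzr⟩ := List.exists_cons_of_length_eq_add_one
      (n := m + 1) (l := ((x :: p).reverse ++ y :: q).take (m + 2)) (by simp at hp hq ⊢; omega)
    exact ⟨z, r, by rw [← hzr]; simp at hp hq ⊢; omega,
      hzr ▸ (hpD.reverse_append hqD hdisj hxy).take _⟩

end Paths

section CommonNeighbors

variable {V : Type*} [Fintype V] [DecidableEq V] (G : SimpleGraph V) [DecidableRel G.Adj]

/-- Double count the edges between `N(v)` and the complement of `R ∪ {v}`, `R` being the set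
counted: each of the at least `μ|V|` vertices of `N(v)` sends at least `μ|V| - |R| - 1` edges
there, while each vertex there receives fewer than `μ²|V|/4`. -/
lemma le_card_filter_card_inter_neighborFinset {μ : ℝ}
    (hδ : ∀ w, μ * Fintype.card V ≤ G.degree w) (h2 : 2 ≤ μ * Fintype.card V) (v : V) :
    μ / 4 * Fintype.card V ≤ #{u | u ≠ v ∧
      μ ^ 2 / 4 * Fintype.card V ≤ #(G.neighborFinset v ∩ G.neighborFinset u)} := by
  set n : ℝ := (Fintype.card V : ℝ)
  set R : Finset V :=
    {u | u ≠ v ∧ μ ^ 2 / 4 * n ≤ #(G.neighborFinset v ∩ G.neighborFinset u)}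
  set S := insert v R
  set B := G.neighborFinset v
  have hcount : ∑ w ∈ B, (#((univ \ S).filter (G.Adj w)) : ℝ) =
      ∑ x ∈ univ \ S, (#(B.filter (G.Adj · x)) : ℝ) := by
    exact_mod_cast sum_card_bipartiteAbove_eq_sum_card_bipartiteBelow G.Adj
  have hlow : ∀ w ∈ B, μ * n - #S ≤ (#((univ \ S).filter (G.Adj w)) : ℝ) := fun w _ => by
    have hsub : G.neighborFinset w ⊆ (univ \ S).filter (G.Adj w) ∪ S := fun x hx => by
      by_cases hxS : x ∈ S <;> simp_all
    have : (G.degree w : ℝ) ≤ #((univ \ S).filter (G.Adj w)) + #S := by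
      rw [← card_neighborFinset_eq_degree]
      exact_mod_cast (card_le_card hsub).trans (card_union_le _ _)
    linarith [hδ w]
  have hup : ∀ x ∈ univ \ S, (#(B.filter (G.Adj · x)) : ℝ) ≤ μ ^ 2 / 4 * n := by
    intro x hx
    have hB : B.filter (G.Adj · x) = B ∩ G.neighborFinset x := by
      ext w
      simp [B, adj_comm]
    simp only [S, R, mem_sdiff, mem_insert, mem_filter, mem_univ, true_and, not_or, not_and,
      not_le] at hx
    rw [hB]
    exact (hx.2 hx.1).le
  by_contra hR
  rw [not_le] at hR
  have hS : (#S : ℝ) ≤ #R + 1 := by exact_mod_cast card_insert_le v R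
  have hB : μ * n ≤ #B := by rw [card_neighborFinset_eq_degree]; exact hδ v
  have hsum_low :
      (#B : ℝ) * (μ * n - #S) ≤ ∑ w ∈ B, (#((univ \ S).filter (G.Adj w)) : ℝ) := by
    simpa using card_nsmul_le_sum B _ _ hlow
  have hsum_up : ∑ x ∈ univ \ S, (#(B.filter (G.Adj · x)) : ℝ) ≤ n * (μ ^ 2 / 4 * n) := by
    refine (sum_le_card_nsmul _ _ _ hup).trans ?_
    rw [nsmul_eq_mul]
    gcongr
    exact Nat.cast_le.mpr (card_le_univ (univ \ S))
  nlinarith [mul_le_mul_of_nonneg_right hB (by linarith : (0 : ℝ) ≤ μ * n - #S)]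

end CommonNeighbors



end SimpleGraph

namespace RTT

open SimpleGraph

section SpansCopy

variable {k n : ℕ} {F : SimpleGraph (Fin k)} {G : SimpleGraph (Fin n)} {S : Finset (Fin n)}

lemma spansCopy_image {f : Fin k → Fin n} (hf : IsPartialCopy F G univ f) :
    SpansCopy F G (univ.image f) :=
  ⟨f, fun _ _ h => hf.1 (by simp) (by simp) h, fun a b => hf.2 a (mem_univ a) b (mem_univ b),
    rfl⟩

lemma SpansCopy.card_eq (h : SpansCopy F G S) : S.card = k := by
  obtain ⟨f, hf, -, rfl⟩ := h
  rw [card_image_of_injective _ hf, card_univ, Fintype.card_fin]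

lemma SpansCopy.perfTilingOn (h : SpansCopy F G S) : PerfTilingOn F G S :=
  ⟨{S}, ⟨by simpa using h, by simp⟩, by simp⟩

lemma spansCopy_top_of_isNClique (h : G.IsNClique k S) :
    SpansCopy (⊤ : SimpleGraph (Fin k)) G S := by
  rw [← S.image_orderEmbOfFin_univ h.card_eq]
  refine spansCopy_image ⟨(S.orderEmbOfFin _).injective.injOn, fun a _ b _ hab => ?_⟩
  exact h.isClique (S.orderEmbOfFin_mem _ a) (S.orderEmbOfFin_mem _ b)
    ((S.orderEmbOfFin _).injective.ne hab.ne)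

lemma spansCopy_cycleGraph_cons {w : Fin n} {p : List (Fin n)} (hk : 3 ≤ k)
    (hlen : p.length + 1 = k) (hnd : (w :: p).Nodup) (hch : p.IsChain G.Adj)
    (hw : ∀ x ∈ p, G.Adj w x) : SpansCopy (cycleGraph k) G (insert w p.toFinset) := by
  obtain ⟨m, rfl⟩ : ∃ m, k = m + 3 := ⟨k - 3, by omega⟩
  have hl : (w :: p).length = m + 3 := by simp [hlen]
  set f : Fin (m + 3) → Fin n := fun i => (w :: p)[i.val]
  have hstep : ∀ i : Fin (m + 3), G.Adj (f i) (f (i + 1)) := by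
    intro i
    simp only [f, Fin.val_add_one]
    split_ifs with hi
    · subst hi
      exact (hw _ (List.getElem_mem _)).symm
    · refine List.isChain_iff_getElem.mp (hch.cons fun y hy => hw y (List.mem_of_mem_head? hy)) _ _
  have himg : univ.image f = insert w p.toFinset := by
    ext x
    simp only [mem_image, mem_univ, true_and, f, mem_insert, List.mem_toFinset]
    rw [← List.mem_cons, List.mem_iff_getElem]
    exact ⟨fun ⟨i, hi⟩ => ⟨i, by omega, hi⟩,
      fun ⟨i, hi, hx⟩ => ⟨⟨i, by omega⟩, hx⟩⟩
  rw [← himg]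
  refine spansCopy_image ⟨fun a _ b _ hab => Fin.ext ((List.Nodup.getElem_inj_iff hnd).mp hab),
    fun a _ b _ hab => ?_⟩
  rcases cycleGraph_adj.mp hab with h | h <;> obtain rfl := eq_add_of_sub_eq' h
  · exact (hstep b).symm
  · exact hstep a

end SpansCopy

section Reachability

variable {k n : ℕ} {G : SimpleGraph (Fin n)} {A C : Finset (Fin n)} {x : ℝ}

lemma MinDegGE.le_degree [DecidableRel G.Adj] (h : MinDegGE G x) (v : Fin n) :
    x ≤ G.degree v := by
  rw [← card_neighborFinset_eq_degree, neighborFinset_def, ← Set.ncard_eq_toFinset_card']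
  exact h v

lemma IndepBound.exists_isNClique {r : ℕ} (h : IndepBound G r x) (hC : x < #C) :
    ∃ T ⊆ C, G.IsNClique r T := by
  by_contra! hno
  exact (h C hno).not_gt hC

lemma IndepBound.card_le_of_isIndepSet (h : IndepBound G 2 x) {T : Finset (Fin n)}
    (hT : G.IsIndepSet T) : #T ≤ ⌊x⌋₊ := by
  refine Nat.le_floor (h T fun T' hT' hcl => ?_)
  obtain ⟨u, v, huv, rfl⟩ := card_eq_two.mp hcl.card_eq
  exact hT (hT' (by simp)) (hT' (by simp)) huv (hcl.isClique (by simp) (by simp) huv)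

def ExtendsToCopy (F : SimpleGraph (Fin k)) (G : SimpleGraph (Fin n)) (C S : Finset (Fin n)) :
    Prop :=
  ∀ w ∉ S, (∀ c ∈ C, G.Adj w c) → SpansCopy F G (insert w S)

lemma exists_extendsToCopy_top (hk : 1 ≤ k) (hind : IndepBound G (k - 1) x) (hC : x < #C)
    (hCA : Disjoint C A) :
    ∃ S, Disjoint S A ∧ ExtendsToCopy (⊤ : SimpleGraph (Fin k)) G C S := by
  obtain ⟨T, hTC, hT⟩ := hind.exists_isNClique hC
  refine ⟨T, disjoint_of_subset_left hTC hCA, fun w _ hwC => ?_⟩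
  have := hT.insert fun b hb => hwC b (hTC hb)
  rw [Nat.sub_add_cancel hk] at this
  exact spansCopy_top_of_isNClique this

lemma exists_extendsToCopy_cycleGraph (hk : 3 ≤ k) (hind : IndepBound G 2 x)
    (hC : (⌊x⌋₊ + 1) * (k - 1) ^ 2 ≤ #C) (hCA : Disjoint C A) :
    ∃ S, Disjoint S A ∧ ExtendsToCopy (cycleGraph k) G C S := by
  obtain ⟨y, p, hp, hpC⟩ := exists_isPathIn (fun T hT => hind.card_le_of_isIndepSet hT) (k - 2)
    (by rwa [show k - 2 + 1 = k - 1 by omega])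
  refine ⟨(y :: p).toFinset, disjoint_left.mpr fun z hz => disjoint_left.mp hCA
    (hpC.2.2 z (List.mem_toFinset.mp hz)), fun w hw hwC => ?_⟩
  refine spansCopy_cycleGraph_cons hk (by omega) ?_ hpC.1 fun z hz => hwC z (hpC.2.2 z hz)
  exact List.nodup_cons.mpr ⟨by simpa using hw, hpC.2.1⟩

/-- Embed `F` with the neighbour of a leaf `ℓ` mapped into `C`; any vertex adjacent to all of `C`
can then play the role of `ℓ`. -/
lemma exists_extendsToCopy_of_isTree [DecidableRel G.Adj] {F : SimpleGraph (Fin k)}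
    (hF : F.IsTree) (hk : 2 ≤ k) (hC : C.Nonempty) (hCA : Disjoint C A)
    (hdeg : ∀ w, #A + k ≤ G.degree w) : ∃ S, Disjoint S A ∧ ExtendsToCopy F G C S := by
  classical
  have : Nontrivial (Fin k) := Fin.nontrivial_iff_two_le.mpr hk
  obtain ⟨ℓ, hℓ⟩ := hF.exists_vert_degree_one_of_nontrivial
  obtain ⟨p, -, hp⟩ := degree_eq_one_iff_existsUnique_adj.mp hℓ
  obtain ⟨c, hc⟩ := hC
  obtain ⟨f, hf, hfp, hfA⟩ :=
    hF.exists_isPartialCopy p (disjoint_left.mp hCA hc) (by simpa using hdeg)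
  refine ⟨(univ.erase ℓ).image f, disjoint_left.mpr fun z hz => ?_, fun w hw hwC => ?_⟩
  · obtain ⟨a, -, rfl⟩ := mem_image.mp hz
    exact hfA a
  have hcopy := (hf.mono (subset_univ _)).update_insert (notMem_erase ℓ univ) hw
    fun b _ hb => by rw [hp b hb, hfp]; exact hwC c hc
  rw [insert_erase (mem_univ ℓ)] at hcopy
  convert spansCopy_image hcopy using 1
  conv_rhs => rw [← insert_erase (mem_univ ℓ), image_insert, Function.update_self]
  congr 1
  exact (image_congr fun a ha => Function.update_of_ne (β := fun _ => Fin n)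
    (ne_of_mem_erase (mem_coe.mp ha)) w f).symm

lemma exists_extendsToCopy [DecidableRel G.Adj] {r : ℕ} {F : SimpleGraph (Fin k)} (hk : 3 ≤ k)
    (hF : (F = ⊤ ∧ r = k - 1) ∨ ((F.IsTree ∨ F = cycleGraph k) ∧ r = 2)) (hx : 0 ≤ x)
    (hind : IndepBound G r x) (hCA : Disjoint C A) (hC : (x + 1) * k ^ 2 ≤ #C)
    (hdeg : ∀ w, #A + k ≤ G.degree w) : ∃ S, Disjoint S A ∧ ExtendsToCopy F G C S := by
  have hk₁ : (1 : ℝ) ≤ k ^ 2 := one_le_pow₀ (by exact_mod_cast (by omega : 1 ≤ k))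
  have hC₁ : x + 1 ≤ #C := (le_mul_of_one_le_right (by linarith) hk₁).trans hC
  rcases hF with ⟨rfl, rfl⟩ | ⟨hF | rfl, rfl⟩
  · exact exists_extendsToCopy_top (by omega) hind (by linarith) hCA
  · refine exists_extendsToCopy_of_isTree hF (by omega) (card_pos.mp ?_) hCA hdeg
    exact_mod_cast (by linarith : (0 : ℝ) < #C)
  · refine exists_extendsToCopy_cycleGraph hk hind ?_ hCA
    have hfl : (⌊x⌋₊ : ℝ) ≤ x := Nat.floor_le hx
    have hk1 : ((k - 1 : ℕ) : ℝ) ≤ k := by exact_mod_cast Nat.sub_le k 1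
    have : (((⌊x⌋₊ + 1) * (k - 1) ^ 2 : ℕ) : ℝ) ≤ #C := by
      push_cast
      refine le_trans ?_ hC
      gcongr
    exact_mod_cast this

/-- `C` is taken inside the common neighbourhood of `u` and `v`, so one set `S` completes both. -/
lemma fReachable_of_extendsToCopy [DecidableRel G.Adj] {F : SimpleGraph (Fin k)} {m c : ℝ}
    (hext : ∀ C A : Finset (Fin n), Disjoint C A → (#A : ℝ) ≤ m + 2 → c ≤ #C →
      ∃ S, Disjoint S A ∧ ExtendsToCopy F G C S)
    {u v : Fin n} (huv : c + m + 2 ≤ #(G.neighborFinset u ∩ G.neighborFinset v)) :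
    FReachable F G m 1 u v := by
  intro W hW
  set N := G.neighborFinset u ∩ G.neighborFinset v
  set A := insert u (insert v W)
  have hA : (#A : ℝ) ≤ #W + 2 := by
    exact_mod_cast (card_insert_le _ _).trans (add_le_add_left (card_insert_le _ _) 1)
  have hN : (#N : ℝ) ≤ #(N \ A) + #A := by exact_mod_cast card_le_card_sdiff_add_card
  obtain ⟨S, hSA, hS⟩ := hext (N \ A) A sdiff_disjoint (by linarith) (by linarith)
  have hu : u ∉ S := disjoint_right.mp hSA (mem_insert_self u _)
  have hv : v ∉ S := disjoint_right.mp hSA (mem_insert_of_mem (mem_insert_self v W))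
  have hNA : ∀ c ∈ N \ A, G.Adj u c ∧ G.Adj v c := fun c hc => by
    simpa [N] using (mem_sdiff.mp hc).1
  have hSu := hS u hu fun c hc => (hNA c hc).1
  have hSv := hS v hv fun c hc => (hNA c hc).2
  refine ⟨S, disjoint_of_subset_right (fun z hz => mem_insert_of_mem (mem_insert_of_mem hz)) hSA,
    hu, hv, ?_, hSu.perfTilingOn, hSv.perfTilingOn⟩
  have := hSu.card_eq
  rw [card_insert_of_notMem hu] at this
  omega

end Reachability

end RTT

open RTT in
/-- Every vertex is `(F, (μ²/8)n, 1)`-reachable to at least `(μ/4)n`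
other vertices. -/
theorem reachable_to_many :
    ∀ k r : ℕ, 3 ≤ k → ∀ F : SimpleGraph (Fin k),
    ((F = ⊤ ∧ r = k - 1) ∨
     ((F.IsTree ∨ F = SimpleGraph.cycleGraph k) ∧ r = 2)) →
    ∀ μ : ℝ, 0 < μ →
    ∃ α : ℝ, 0 < α ∧ ∃ N : ℕ, ∀ n : ℕ, N ≤ n →
      ∀ G : SimpleGraph (Fin n),
        MinDegGE G (μ * n) → IndepBound G r (α * n) →
        ∀ v : Fin n, ∃ R : Finset (Fin n), v ∉ R ∧ (μ / 4) * n ≤ (R.card : ℝ) ∧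
          ∀ u ∈ R, FReachable F G ((μ ^ 2 / 8) * n) 1 v u := by
  intro k r hk F hF μ hμ
  -- `(αn + 1)k² = μ²n/16 + k²` common neighbours are needed besides `W ∪ {u, v}`, out of `μ²n/4`.
  refine ⟨μ ^ 2 / (16 * k ^ 2), by positivity, ⌈16 * (k ^ 2 + 2) / μ ^ 2⌉₊,
    fun n hn G hδ hind v => ?_⟩
  classical
  have hδ' := hδ.le_degree
  have hμn : 16 * (k ^ 2 + 2) ≤ μ ^ 2 * n := by
    rw [← div_le_iff₀' (by positivity)]
    exact Nat.ceil_le.mp hn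
  have hμ1 : μ * n < n := by
    simpa using (hδ' v).trans_lt (Nat.cast_lt.mpr (G.degree_lt_card_verts v))
  have hμμ : μ ^ 2 * n ≤ μ * n := by nlinarith
  have hkk : (k : ℝ) ≤ k ^ 2 := by exact_mod_cast Nat.le_self_pow two_ne_zero k
  have hR := G.le_card_filter_card_inter_neighborFinset (μ := μ) (by simpa using hδ')
    (by simp only [Fintype.card_fin]; nlinarith) v
  simp only [Fintype.card_fin] at hR
  refine ⟨_, by simp, hR, fun u hu => ?_⟩
  refine fReachable_of_extendsToCopy (c := (μ ^ 2 / (16 * k ^ 2) * n + 1) * k ^ 2)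
    (fun C A hCA hA hC => exists_extendsToCopy hk hF (by positivity) hind hCA hC fun w => ?_) ?_
  · have : (#A + k : ℝ) ≤ G.degree w := by linarith [hδ' w]
    exact_mod_cast this
  · have : (μ ^ 2 / (16 * k ^ 2) * n + 1) * k ^ 2 = μ ^ 2 * n / 16 + k ^ 2 := by
      field_simp
    linarith [(mem_filter.mp hu).2.2]
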